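/- arXiv:1905.13228 — 2 statements merged into one kernel-verified Lean document; each statement's English description precedes it below -/
import Mathlib

section
/- Let G be a finite (d_u, d_w)-regular bipartite graph with bipartition (U, W) and let {X_1, …, X_ℓ, Y} be a Godsil–McKay switching partition of its vertex set. If X_i is of Type 3 and X_j is of Type 1 or of Type 2 (i ≠ j), then there is no edge of G between a vertex of X_i and a vertex of X_j. -/
open Finset SimpleGraph Polynomial

open scoped Classical in
/-- Number of neighbors of `v` inside the finset `S`, in the graph `G`. -/
noncomputable def nbrsIn {V : Type*} (G : SimpleGraph V) (v : V) (S : Finset V) : ℕ :=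
  (S.filter (fun w => G.Adj v w)).card

/-- The `i`-th part `X_i` of a partition of the vertex set encoded by `f`
(`f v = some i` means `v ∈ X_i`, and `f v = none` means `v ∈ Y`). -/
def Xset {V : Type*} [Fintype V] {ℓ : ℕ} (f : V → Option (Fin ℓ)) (i : Fin ℓ) : Finset V :=
  Finset.univ.filter (fun v => f v = some i)

/-- The part `Y` of the partition of the vertex set encoded by `f`. -/
def Yset {V : Type*} [Fintype V] {ℓ : ℕ} (f : V → Option (Fin ℓ)) : Finset V :=
  Finset.univ.filter (fun v => f v = none)

/-- The partition `{X_1, …, X_ℓ, Y}` (encoded by `f`) is a Godsil–McKay switching partition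
of `G`: every `y ∈ Y` has `0`, `|X_i|/2` or `|X_i|` neighbors in each `X_i`, and for all `i, j`,
all vertices of `X_i` have the same number of neighbors in `X_j`. -/
def IsGMPartition {V : Type*} [Fintype V] (G : SimpleGraph V) {ℓ : ℕ}
    (f : V → Option (Fin ℓ)) : Prop :=
  (∀ y ∈ Yset f, ∀ i : Fin ℓ,
      nbrsIn G y (Xset f i) = 0 ∨ 2 * nbrsIn G y (Xset f i) = (Xset f i).card ∨
        nbrsIn G y (Xset f i) = (Xset f i).card) ∧
  (∀ i j : Fin ℓ, ∀ u ∈ Xset f i, ∀ v ∈ Xset f i,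
      nbrsIn G u (Xset f j) = nbrsIn G v (Xset f j))

/-- The pairs of vertices whose adjacency is flipped by the Godsil–McKay switching:
one of them lies in `Y`, the other in some `X_i`, and the former has exactly `|X_i|/2`
neighbors in `X_i`. -/
def gmFlip {V : Type*} [Fintype V] (G : SimpleGraph V) {ℓ : ℕ} (f : V → Option (Fin ℓ))
    (u v : V) : Prop :=
  (∃ i : Fin ℓ, f u = none ∧ f v = some i ∧ 2 * nbrsIn G u (Xset f i) = (Xset f i).card) ∨
  (∃ i : Fin ℓ, f v = none ∧ f u = some i ∧ 2 * nbrsIn G v (Xset f i) = (Xset f i).card)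

/-- The Godsil–McKay switched graph `G'`: adjacency within `X_1 ∪ … ∪ X_ℓ`, or within `Y`,
is as in `G`; adjacency between `y ∈ Y` and `x ∈ X_i` is complemented exactly when `y` has
`|X_i|/2` neighbors in `X_i` in `G`. -/
def gmSwitch {V : Type*} [Fintype V] (G : SimpleGraph V) {ℓ : ℕ} (f : V → Option (Fin ℓ)) :
    SimpleGraph V where
  Adj u v := (gmFlip G f u v ∧ ¬ G.Adj u v ∧ u ≠ v) ∨ (¬ gmFlip G f u v ∧ G.Adj u v)
  symm := by
    constructor
    intro u v h
    have hsymm : gmFlip G f u v ↔ gmFlip G f v u := ⟨Or.symm, Or.symm⟩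
    rcases h with ⟨h1, h2, h3⟩ | ⟨h1, h2⟩
    · exact Or.inl ⟨hsymm.mp h1, fun h => h2 (G.adj_symm h), h3.symm⟩
    · exact Or.inr ⟨fun h => h1 (hsymm.mpr h), G.adj_symm h2⟩
  loopless := by
    constructor
    intro u h
    rcases h with ⟨_, _, h3⟩ | ⟨_, h2⟩
    · exact h3 rfl
    · exact G.irrefl h2

/-- `(U, W)` is a bipartition of the vertex set of `G` witnessing that `G` is a
`(du, dw)`-regular bipartite graph: every edge joins `U` to `W`, every vertex of `U` has
degree `du`, and every vertex of `W` has degree `dw`. -/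
def IsBiRegularBipartition {V : Type*} [Fintype V] [DecidableEq V] (G : SimpleGraph V)
    (U W : Finset V) (du dw : ℕ) : Prop :=
  U ∪ W = Finset.univ ∧ U ∩ W = ∅ ∧
  (∀ u v, G.Adj u v → (u ∈ U ∧ v ∈ W) ∨ (u ∈ W ∧ v ∈ U)) ∧
  (∀ u ∈ U, nbrsIn G u Finset.univ = du) ∧
  (∀ w ∈ W, nbrsIn G w Finset.univ = dw)

/-! A Type-3 part meets the side of the bipartition that contains a Type-1 or Type-2 part. That
side is independent, so the vertex of the Type-3 part lying on it has no neighbour in the other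
part; by the equitability condition (ii) then no vertex of the Type-3 part has one. -/

lemma nbrsIn_eq_zero_iff {V : Type*} (G : SimpleGraph V) (v : V) (S : Finset V) :
    nbrsIn G v S = 0 ↔ ∀ w ∈ S, ¬ G.Adj v w := by
  simp only [nbrsIn, Finset.card_eq_zero, Finset.filter_eq_empty_iff]

section Bipartition

variable {V : Type*} [Fintype V] [DecidableEq V] {G : SimpleGraph V} {U W : Finset V}
  {du dw : ℕ}

lemma IsBiRegularBipartition.isIndepSet_left (hG : IsBiRegularBipartition G U W du dw) :
    G.IsIndepSet (U : Set V) := by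
  obtain ⟨-, hUW, hbip, -, -⟩ := hG
  intro a ha b hb _ hab
  have hdisj := Finset.disjoint_iff_inter_eq_empty.mpr hUW
  rcases hbip a b hab with ⟨-, hbW⟩ | ⟨haW, -⟩
  · exact Finset.disjoint_left.mp hdisj hb hbW
  · exact Finset.disjoint_left.mp hdisj ha haW

lemma IsBiRegularBipartition.symm (hG : IsBiRegularBipartition G U W du dw) :
    IsBiRegularBipartition G W U dw du := by
  obtain ⟨hcover, hUW, hbip, hdu, hdw⟩ := hG
  exact ⟨by rwa [Finset.union_comm], by rwa [Finset.inter_comm],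
    fun u v h => (hbip u v h).symm, hdw, hdu⟩

lemma IsBiRegularBipartition.isIndepSet_right (hG : IsBiRegularBipartition G U W du dw) :
    G.IsIndepSet (W : Set V) :=
  hG.symm.isIndepSet_left

end Bipartition

lemma IsGMPartition.not_adj_of_not_adj_of_mem {V : Type*} [Fintype V] {G : SimpleGraph V}
    {ℓ : ℕ} {f : V → Option (Fin ℓ)} (hf : IsGMPartition G f) {i j : Fin ℓ} {u₀ : V}
    (hu₀ : u₀ ∈ Xset f i) (h₀ : ∀ v ∈ Xset f j, ¬ G.Adj u₀ v) :
    ∀ u ∈ Xset f i, ∀ v ∈ Xset f j, ¬ G.Adj u v := by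
  intro u hu
  rw [← nbrsIn_eq_zero_iff, hf.2 i j u hu u₀ hu₀, nbrsIn_eq_zero_iff]
  exact h₀

lemma IsGMPartition.not_adj_of_isIndepSet {V : Type*} [Fintype V] [DecidableEq V] {G : SimpleGraph V}
    {ℓ : ℕ} {f : V → Option (Fin ℓ)} (hf : IsGMPartition G f) {i j : Fin ℓ} {S : Finset V}
    (hS : G.IsIndepSet (S : Set V)) (hi : (Xset f i ∩ S).Nonempty) (hj : Xset f j ⊆ S) :
    ∀ u ∈ Xset f i, ∀ v ∈ Xset f j, ¬ G.Adj u v := by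
  obtain ⟨u₀, hu₀⟩ := hi
  obtain ⟨hu₀i, hu₀S⟩ := Finset.mem_inter.mp hu₀
  refine hf.not_adj_of_not_adj_of_mem hu₀i fun v hv hadj => ?_
  exact hS (Finset.mem_coe.mpr hu₀S) (Finset.mem_coe.mpr (hj hv)) hadj.ne hadj

theorem gm_no_edge_type3_type12_general {V : Type*} [Fintype V] [DecidableEq V]
    (G : SimpleGraph V) (U W : Finset V) (du dw : ℕ)
    (hG : IsBiRegularBipartition G U W du dw)
    {ℓ : ℕ} (f : V → Option (Fin ℓ)) (hf : IsGMPartition G f)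
    (i j : Fin ℓ)
    (h3 : (Xset f i ∩ U).Nonempty ∧ (Xset f i ∩ W).Nonempty)
    (h12 : Xset f j ⊆ U ∨ Xset f j ⊆ W) :
    ∀ u ∈ Xset f i, ∀ v ∈ Xset f j, ¬ G.Adj u v := by
  rcases h12 with hjU | hjW
  · exact hf.not_adj_of_isIndepSet hG.isIndepSet_left h3.1 hjU
  · exact hf.not_adj_of_isIndepSet hG.isIndepSet_right h3.2 hjW

/-- Property P1: in a `(du, dw)`-regular bipartite graph with a Godsil–McKay switching
partition, there is no edge between a Type-3 set `X_i` (one meeting both `U` and `W`) and a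
Type-1 or Type-2 set `X_j` (one contained in `U` or in `W`). -/
theorem gm_no_edge_type3_type12 {V : Type*} [Fintype V] [DecidableEq V]
    (G : SimpleGraph V) (U W : Finset V) (du dw : ℕ)
    (hG : IsBiRegularBipartition G U W du dw)
    {ℓ : ℕ} (f : V → Option (Fin ℓ)) (hf : IsGMPartition G f)
    (i j : Fin ℓ) (hij : i ≠ j)
    (h3 : (Xset f i ∩ U).Nonempty ∧ (Xset f i ∩ W).Nonempty)
    (h12 : Xset f j ⊆ U ∨ Xset f j ⊆ W) :
    ∀ u ∈ Xset f i, ∀ v ∈ Xset f j, ¬ G.Adj u v :=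
  gm_no_edge_type3_type12_general G U W du dw hG f hf i j h3 h12
end

section
/- Let G be a finite (d_u, d_w)-regular bipartite graph with bipartition (U, W) and let {X_1, …, X_ℓ, Y} be a Godsil–McKay switching partition of its vertex set. Let X_i be of Type 3 and let y ∈ Y have at least one neighbor in X_i. Then y has exactly |X_i|/2 neighbors in X_i, and either all of these neighbors lie in X_i^1 or all of them lie in X_i^2 (y cannot have neighbors in both X_i^1 and X_i^2). -/
open Finset SimpleGraph Polynomial

/-!
A vertex `y` of a bipartite graph has all its neighbours on the side opposite to its own. Since a
Type 3 part `X_i` meets both sides, `y` cannot be adjacent to all of `X_i`; of the three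
neighbour counts a Godsil–McKay partition allows, a nonzero count must then be `|X_i|/2`.
-/

theorem nbrsIn_eq_card_iff {V : Type*} (G : SimpleGraph V) (v : V) (S : Finset V) :
    nbrsIn G v S = S.card ↔ ∀ w ∈ S, G.Adj v w := by
  classical
  exact card_filter_eq_iff

section Bipartite

variable {V : Type*} {G : SimpleGraph V} {s t : Set V} {y : V}

theorem SimpleGraph.IsBipartiteWith.forall_adj_mem_or (h : G.IsBipartiteWith s t)
    (hy : y ∈ s ∪ t) : (∀ v, G.Adj y v → v ∈ s) ∨ (∀ v, G.Adj y v → v ∈ t) := by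
  rcases hy with hys | hyt
  · exact Or.inr fun _ hadj => h.mem_of_mem_adj hys hadj
  · exact Or.inl fun _ hadj => h.symm.mem_of_mem_adj hyt hadj

theorem SimpleGraph.IsBipartiteWith.nbrsIn_ne_card (h : G.IsBipartiteWith s t)
    (hy : y ∈ s ∪ t) {S : Finset V} (hs : ∃ x ∈ S, x ∈ s) (ht : ∃ x ∈ S, x ∈ t) :
    nbrsIn G y S ≠ S.card := by
  obtain ⟨xs, hxsS, hxs⟩ := hs
  obtain ⟨xt, hxtS, hxt⟩ := ht
  rw [Ne, nbrsIn_eq_card_iff]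
  intro hall
  rcases h.forall_adj_mem_or hy with hnbr_s | hnbr_t
  · exact Set.disjoint_left.mp h.disjoint (hnbr_s xt (hall xt hxtS)) hxt
  · exact Set.disjoint_left.mp h.disjoint hxs (hnbr_t xs (hall xs hxsS))

end Bipartite

section BiRegular

variable {V : Type*} [Fintype V] [DecidableEq V] {G : SimpleGraph V} {U W : Finset V}
  {du dw : ℕ}

theorem IsBiRegularBipartition.isBipartiteWith (hG : IsBiRegularBipartition G U W du dw) :
    G.IsBipartiteWith U W where
  disjoint := by
    rw [Finset.disjoint_coe, Finset.disjoint_iff_inter_eq_empty]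
    exact hG.2.1
  mem_of_adj := hG.2.2.1

theorem IsBiRegularBipartition.mem_union (hG : IsBiRegularBipartition G U W du dw) (v : V) :
    v ∈ (U : Set V) ∪ W := by
  rw [← Finset.coe_union, hG.1, Finset.coe_univ]
  exact Set.mem_univ v

end BiRegular

theorem IsGMPartition.two_mul_nbrsIn_eq_card {V : Type*} [Fintype V] {G : SimpleGraph V}
    {ℓ : ℕ} {f : V → Option (Fin ℓ)} (hf : IsGMPartition G f) {y : V} (hy : y ∈ Yset f)
    (i : Fin ℓ) (hpos : 0 < nbrsIn G y (Xset f i))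
    (hne : nbrsIn G y (Xset f i) ≠ (Xset f i).card) :
    2 * nbrsIn G y (Xset f i) = (Xset f i).card := by
  rcases hf.1 y hy i with hzero | hhalf | hfull
  · omega
  · exact hhalf
  · exact absurd hfull hne

/-- Property P4: in a `(du, dw)`-regular bipartite graph with a Godsil–McKay switching
partition, if `X_i` is of Type 3 and `y ∈ Y` has at least one neighbor in `X_i`, then `y`
has exactly `|X_i|/2` neighbors in `X_i`, and either all of these neighbors lie in
`X_i ∩ U` or all of them lie in `X_i ∩ W`. -/
theorem gm_type3_neighbors_in_one_side {V : Type*} [Fintype V] [DecidableEq V]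
    (G : SimpleGraph V) (U W : Finset V) (du dw : ℕ)
    (hG : IsBiRegularBipartition G U W du dw)
    {ℓ : ℕ} (f : V → Option (Fin ℓ)) (hf : IsGMPartition G f)
    (i : Fin ℓ)
    (h3 : (Xset f i ∩ U).Nonempty ∧ (Xset f i ∩ W).Nonempty)
    (y : V) (hy : y ∈ Yset f) (hnbr : 1 ≤ nbrsIn G y (Xset f i)) :
    2 * nbrsIn G y (Xset f i) = (Xset f i).card ∧
    ((∀ v ∈ Xset f i, G.Adj y v → v ∈ U) ∨ (∀ v ∈ Xset f i, G.Adj y v → v ∈ W)) := by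
  have hbip := hG.isBipartiteWith
  have hyUW := hG.mem_union y
  obtain ⟨⟨xu, hxu⟩, ⟨xw, hxw⟩⟩ := h3
  rw [Finset.mem_inter] at hxu hxw
  have hne : nbrsIn G y (Xset f i) ≠ (Xset f i).card :=
    hbip.nbrsIn_ne_card hyUW ⟨xu, hxu.1, hxu.2⟩ ⟨xw, hxw.1, hxw.2⟩
  refine ⟨hf.two_mul_nbrsIn_eq_card hy i hnbr hne, ?_⟩
  rcases hbip.forall_adj_mem_or hyUW with hnbr_U | hnbr_W
  · exact Or.inl fun v _ hadj => hnbr_U v hadj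
  · exact Or.inr fun v _ hadj => hnbr_W v hadj
end
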